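/- Let T be a (d₁,d₂)-biregular tree with d₁,d₂ ≥ 3 and Γ ≤ Aut(T) a tree lattice with associated Markov chain (Mₙ) on EQ. If there exist two edges e, f ∈ EQ such that e ≠ f̄, ∂₁(f) = ∂₀(e), ind(e) > 1 and ind(f) > 1, then the period of (Mₙ) is exactly 2. -/

import Mathlib

open Filter Topology MeasureTheory

attribute [local instance] Classical.propDecidable

namespace TreeDyn


variable {V : Type*}

/-- The type of directed edges of a simple graph. -/
def DEdge (T : SimpleGraph V) : Type _ := {p : V × V // T.Adj p.1 p.2}

/-- `T` is a `(d₁,d₂)`-biregular tree: a tree whose vertex set admits a bipartition such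
that every vertex of one class has degree `d₁` and every vertex of the other class has
degree `d₂`. -/
def IsBiregularTree (T : SimpleGraph V) (d₁ d₂ : ℕ) : Prop :=
  T.Connected ∧ T.IsAcyclic ∧
    ∃ c : V → Bool,
      (∀ u v, T.Adj u v → c u ≠ c v) ∧
      (∀ v, c v = true → Nat.card (T.neighborSet v) = d₁) ∧
      (∀ v, c v = false → Nat.card (T.neighborSet v) = d₂)

/-- A permutation of the vertices is an automorphism of `T` acting without edge
inversion if it preserves adjacency and moves every vertex an even distance. -/
def IsTreeAut (T : SimpleGraph V) (σ : Equiv.Perm V) : Prop :=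
  (∀ u v, T.Adj (σ u) (σ v) ↔ T.Adj u v) ∧ ∀ v, Even (T.dist v (σ v))

variable (T : SimpleGraph V) (Λ : Subgroup (Equiv.Perm V))

/-- Two vertices are related if they lie in the same `Λ`-orbit. -/
def vrel (u v : V) : Prop := ∃ γ ∈ Λ, γ u = v

/-- The vertex set of the quotient graph `Q = Λ∖T`. -/
def VQ := Quot (vrel Λ)

/-- Projection of vertices to the quotient graph. -/
def πV : V → VQ Λ := Quot.mk _

/-- Two directed edges are related if they lie in the same `Λ`-orbit. -/
def erel (e f : DEdge T) : Prop :=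
  ∃ γ ∈ Λ, γ e.1.1 = f.1.1 ∧ γ e.1.2 = f.1.2

/-- The directed edge set of the quotient graph `Q = Λ∖T`. -/
def EQ := Quot (erel T Λ)

/-- Projection of directed edges to the quotient graph. -/
def πE : DEdge T → EQ T Λ := Quot.mk _

/-- The initial vertex `∂₀ e` of a quotient edge. -/
noncomputable def tailQ (e : EQ T Λ) : VQ Λ := πV Λ (Quot.out e).1.1

/-- The terminal vertex `∂₁ e` of a quotient edge. -/
noncomputable def headQ (e : EQ T Λ) : VQ Λ := πV Λ (Quot.out e).1.2

/-- The reversal `ē` of a quotient edge. -/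
noncomputable def barQ (e : EQ T Λ) : EQ T Λ :=
  πE T Λ ⟨((Quot.out e).1.2, (Quot.out e).1.1), (Quot.out e).2.symm⟩

/-- The order of the stabilizer of a vertex in `Λ`. -/
noncomputable def stabV (v : V) : ℕ :=
  Nat.card {γ : Λ // (γ : Equiv.Perm V) v = v}

/-- The order of the pointwise stabilizer of a directed edge in `Λ`. -/
noncomputable def stabE (e : DEdge T) : ℕ :=
  Nat.card {γ : Λ // (γ : Equiv.Perm V) e.1.1 = e.1.1 ∧ (γ : Equiv.Perm V) e.1.2 = e.1.2}

/-- The index map of the edge-indexed graph: `ind e = [Λ_{∂₀ẽ} : Λ_ẽ]` for any lift `ẽ`. -/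
noncomputable def indQ (e : EQ T Λ) : ℕ :=
  stabV Λ (Quot.out e).1.1 / stabE T Λ (Quot.out e)

/-- The degree of a vertex of the quotient graph: the degree in `T` of any of its lifts. -/
noncomputable def degQ (v : VQ Λ) : ℕ := Nat.card (T.neighborSet (Quot.out v))

/-- `Δ(e) = ind(ē)/ind(e)`. -/
noncomputable def deltaQ (e : EQ T Λ) : ℝ :=
  (indQ T Λ (barQ T Λ e) : ℝ) / (indQ T Λ e : ℝ)

/-- `Λ` is a tree lattice: a discrete subgroup (finite vertex stabilizers) of `Aut T`
with finite covolume, i.e. `Σ_{v ∈ VQ} N_o(v)⁻¹ < ∞` where `N_o` is the multiplicative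
function along paths determined by `Δ`. -/
def IsTreeLattice : Prop :=
  (∀ γ ∈ Λ, IsTreeAut T γ) ∧
  (∀ v : V, Finite {γ : Λ // (γ : Equiv.Perm V) v = v}) ∧
  ∃ (o : VQ Λ) (N : VQ Λ → ℝ),
    N o = 1 ∧ (∀ v, 0 < N v) ∧
    (∀ e : EQ T Λ, N (headQ T Λ e) = deltaQ T Λ e * N (tailQ T Λ e)) ∧
    Summable (fun v : VQ Λ => (N v)⁻¹)

/-- The transition kernel of the Markov chain associated to `Λ` on the directed edges
of the quotient graph. -/
noncomputable def kerP (e f : EQ T Λ) : ℝ :=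
  if headQ T Λ e = tailQ T Λ f then
    (if f = barQ T Λ e then ((indQ T Λ f : ℝ) - 1) else (indQ T Λ f : ℝ)) /
      ((degQ T Λ (headQ T Λ e) : ℝ) - 1)
  else 0

/-- The `n`-step transition kernel. -/
noncomputable def kerPn : ℕ → EQ T Λ → EQ T Λ → ℝ
  | 0, e, f => if e = f then 1 else 0
  | n + 1, e, f => ∑' g : EQ T Λ, kerPn n e g * kerP T Λ g f

/-- Adjacency in the quotient graph. -/
def AdjQ (u v : VQ Λ) : Prop :=
  ∃ e : EQ T Λ, tailQ T Λ e = u ∧ headQ T Λ e = v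

/-- Graph distance on the quotient graph. -/
noncomputable def distQ (u v : VQ Λ) : ℕ :=
  sInf {n : ℕ | ∃ f : ℕ → VQ Λ, f 0 = u ∧ f n = v ∧ ∀ i < n, AdjQ T Λ (f i) (f (i + 1))}

/-- Distance from a finite set of vertices of the quotient graph. -/
noncomputable def distToF (F : Finset (VQ Λ)) (v : VQ Λ) : ℕ :=
  sInf {n : ℕ | ∃ u ∈ F, distQ T Λ u v = n}

/-- `F` is a finite part for `Λ`: the complement of `F` in the quotient graph is a
disjoint union of finitely many open Nagao rays. -/
def IsFinitePart (F : Finset (VQ Λ)) : Prop :=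
  ∃ (k : ℕ) (ray : Fin k → ℕ → VQ Λ),
    (∀ v : VQ Λ, v ∉ F ↔ ∃ i n, ray i n = v) ∧
    (∀ i n j m, ray i n = ray j m → i = j ∧ n = m) ∧
    (∀ i n, ∃ e : EQ T Λ, tailQ T Λ e = ray i n ∧ headQ T Λ e = ray i (n + 1)) ∧
    (∀ i n, ∀ e f : EQ T Λ, tailQ T Λ e = ray i n → headQ T Λ e = ray i (n + 1) →
      tailQ T Λ f = ray i n → headQ T Λ f = ray i (n + 1) → e = f) ∧
    (∀ i n, ∀ e : EQ T Λ, tailQ T Λ e = ray i n → headQ T Λ e ∉ F →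
      headQ T Λ e = ray i (n + 1) ∨ ∃ m, n = m + 1 ∧ headQ T Λ e = ray i m) ∧
    (∀ i n, ∀ e : EQ T Λ, tailQ T Λ e = ray i n → headQ T Λ e = ray i (n + 1) →
      indQ T Λ e = 1) ∧
    (∀ i n, ∀ e : EQ T Λ, tailQ T Λ e = ray i (n + 1) → headQ T Λ e = ray i n →
      indQ T Λ e = degQ T Λ (ray i n) - 1)

/-- A tree lattice is geometrically finite if its quotient graph contains a nonempty
finite subgraph whose complement is a disjoint union of finitely many open Nagao rays. -/
def IsGeomFinite : Prop := ∃ F : Finset (VQ Λ), F.Nonempty ∧ IsFinitePart T Λ F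

/-- The mass that the projection to `VQ` of the uniform measure on the sphere
`S(vb,n)` gives to the vertex `q` of the quotient graph. -/
noncomputable def sphPush (vb : V) (n : ℕ) (q : VQ Λ) : ℝ :=
  (Nat.card {w : V // T.dist vb w = n ∧ πV Λ w = q} : ℝ) /
    (Nat.card {w : V // T.dist vb w = n} : ℝ)

/-- `ℙ_e(τ = i)` : the probability that the Markov chain started at `e` hits the set of
edges with terminal vertex in `F` for the first time at time `i`. -/
noncomputable def hitP (F : Finset (VQ Λ)) : ℕ → EQ T Λ → ℝ
  | 0, e => if headQ T Λ e ∈ F then 1 else 0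
  | i + 1, e => if headQ T Λ e ∈ F then 0 else ∑' f : EQ T Λ, kerP T Λ e f * hitP F i f

/-- `ℙ_e(τ' = i)` where `τ' = min {n | n ≥ τ, 2 ∣ n}`. -/
noncomputable def hitP' (F : Finset (VQ Λ)) (i : ℕ) (e : EQ T Λ) : ℝ :=
  if 2 ∣ i then hitP T Λ F i e + (if 1 ≤ i then hitP T Λ F (i - 1) e else 0) else 0

/-- `(Ω₀, Ω₁)` is the pair of cyclic classes of the (period two) kernel `P`. -/
def IsCyclicPair (Ω₀ Ω₁ : Set (EQ T Λ)) : Prop :=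
  (∀ e, e ∈ Ω₀ ∨ e ∈ Ω₁) ∧ (∀ e, ¬(e ∈ Ω₀ ∧ e ∈ Ω₁)) ∧
  (∀ e ∈ Ω₀, ∀ f, kerP T Λ e f ≠ 0 → f ∈ Ω₁) ∧
  (∀ e ∈ Ω₁, ∀ f, kerP T Λ e f ≠ 0 → f ∈ Ω₀)

/-- `Ω` is a cyclic class of the kernel `P`. -/
def IsCyclicClass (Ω : Set (EQ T Λ)) : Prop :=
  ∃ Ω', IsCyclicPair T Λ Ω Ω' ∨ IsCyclicPair T Λ Ω' Ω


/-!
The bipartition of `T` is `Λ`-invariant, since elements of `Λ` move vertices an even distance;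
it descends to a `ZMod 2`-valued function on the quotient that increases by one along every
edge. Each transition follows an edge, so every return time is even.

Conversely the chain is irreducible, and the hypotheses give paths `ē → e` of length 1
(as `ind e > 1`) and `ē → f̄ → f → e` of length 3; closing both up through a fixed state yields
two return times that differ by 2.

Irreducibility reduces to every state `z` reaching its reversal `z̄`. Otherwise every state `w`
reachable from `z` has `ind w̄ = 1`, so that `N(∂₁w) = N(∂₀w) / ind w ≤ N(∂₀w)`, and these states
have pairwise distinct heads. Infinitely many of them would give `N(v)⁻¹ ≥ N(∂₁z)⁻¹` at
infinitely many vertices `v`, against summability. Finitely many of them are permuted by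
continuing each one without backtracking; as degrees are at least 3, every such continuation
has index at least 2, so the sum of `N` over their heads would strictly decrease under a
permutation.
-/

open MulAction

variable {T Λ}

theorem card_inf_mul_relIndex {G : Type*} [Group G] (H K : Subgroup G) :
    Nat.card ↥(K ⊓ H) * H.relIndex K = Nat.card K := by
  rw [← Subgroup.inf_relIndex_left, ← Subgroup.relIndex_bot_left, ← Subgroup.relIndex_bot_left,
    Subgroup.relIndex_mul_relIndex _ _ _ bot_le inf_le_left]

theorem relIndex_stabilizer_smul {G α : Type*} [Group G] [MulAction G α] (g : G) (a b : α) :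
    (stabilizer G (g • b)).relIndex (stabilizer G (g • a)) =
      (stabilizer G b).relIndex (stabilizer G a) := by
  rw [stabilizer_smul_eq_stabilizer_map_conj, stabilizer_smul_eq_stabilizer_map_conj,
    Subgroup.relIndex_map_map_of_injective _ _ (MulAut.conj g).injective]

theorem exists_ne_zero_of_tsum_ne_zero {α M : Type*} [AddCommMonoid M] [TopologicalSpace M]
    {f : α → M} (h : ∑' a, f a ≠ 0) : ∃ a, f a ≠ 0 := by
  contrapose! h
  simp [h]

theorem IsBiregularTree.le_card_neighborSet {d₁ d₂ k : ℕ} (hT : IsBiregularTree T d₁ d₂)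
    (h₁ : k ≤ d₁) (h₂ : k ≤ d₂) (v : V) : k ≤ Nat.card (T.neighborSet v) := by
  obtain ⟨-, -, c, -, hc₁, hc₂⟩ := hT
  cases hv : c v
  · rwa [hc₂ v hv]
  · rwa [hc₁ v hv]

theorem vrel_equivalence : Equivalence (vrel Λ) where
  refl _ := ⟨1, Λ.one_mem, rfl⟩
  symm := by
    rintro u v ⟨γ, hγ, rfl⟩
    exact ⟨γ⁻¹, Λ.inv_mem hγ, γ.symm_apply_apply u⟩
  trans := by
    rintro u v w ⟨γ, hγ, rfl⟩ ⟨δ, hδ, rfl⟩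
    exact ⟨δ * γ, Λ.mul_mem hδ hγ, rfl⟩

theorem erel_equivalence : Equivalence (erel T Λ) where
  refl _ := ⟨1, Λ.one_mem, rfl, rfl⟩
  symm := by
    rintro x y ⟨γ, hγ, h₁, h₂⟩
    exact ⟨γ⁻¹, Λ.inv_mem hγ, by rw [← h₁]; exact γ.symm_apply_apply _,
      by rw [← h₂]; exact γ.symm_apply_apply _⟩
  trans := by
    rintro x y z ⟨γ, hγ, h₁, h₂⟩ ⟨δ, hδ, h₃, h₄⟩
    exact ⟨δ * γ, Λ.mul_mem hδ hγ, by rw [Equiv.Perm.mul_apply, h₁, h₃],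
      by rw [Equiv.Perm.mul_apply, h₂, h₄]⟩

theorem πV_eq_iff {u v : V} : πV Λ u = πV Λ v ↔ vrel Λ u v :=
  Quot.eq.trans vrel_equivalence.eqvGen_iff

theorem πE_eq_iff {x y : DEdge T} : πE T Λ x = πE T Λ y ↔ erel T Λ x y :=
  Quot.eq.trans erel_equivalence.eqvGen_iff

theorem πE_surjective : Function.Surjective (πE T Λ) := Quot.exists_rep

theorem erel_out_πE (x : DEdge T) : erel T Λ (Quot.out (πE T Λ x)) x :=
  πE_eq_iff.1 (Quot.out_eq _)

theorem tailQ_mk (x : DEdge T) : tailQ T Λ (πE T Λ x) = πV Λ x.1.1 :=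
  let ⟨γ, hγ, h, _⟩ := erel_out_πE (Λ := Λ) x
  πV_eq_iff.2 ⟨γ, hγ, h⟩

theorem headQ_mk (x : DEdge T) : headQ T Λ (πE T Λ x) = πV Λ x.1.2 :=
  let ⟨γ, hγ, _, h⟩ := erel_out_πE (Λ := Λ) x
  πV_eq_iff.2 ⟨γ, hγ, h⟩

def DEdge.reverse (x : DEdge T) : DEdge T := ⟨(x.1.2, x.1.1), x.2.symm⟩

theorem barQ_mk (x : DEdge T) : barQ T Λ (πE T Λ x) = πE T Λ x.reverse :=
  let ⟨γ, hγ, h₁, h₂⟩ := erel_out_πE (Λ := Λ) x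
  πE_eq_iff.2 ⟨γ, hγ, h₂, h₁⟩

theorem barQ_barQ (q : EQ T Λ) : barQ T Λ (barQ T Λ q) = q := by
  obtain ⟨x, rfl⟩ := πE_surjective q
  rw [barQ_mk, barQ_mk]
  rfl

theorem barQ_injective : Function.Injective (barQ T Λ) :=
  Function.LeftInverse.injective barQ_barQ

theorem tailQ_barQ (q : EQ T Λ) : tailQ T Λ (barQ T Λ q) = headQ T Λ q := by
  obtain ⟨x, rfl⟩ := πE_surjective q
  rw [barQ_mk, tailQ_mk, headQ_mk]
  rfl

theorem headQ_barQ (q : EQ T Λ) : headQ T Λ (barQ T Λ q) = tailQ T Λ q := by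
  obtain ⟨x, rfl⟩ := πE_surjective q
  rw [barQ_mk, tailQ_mk, headQ_mk]
  rfl

theorem finite_setOf_headQ_eq (haut : ∀ γ ∈ Λ, IsTreeAut T γ) (v : VQ Λ)
    [Finite (T.neighborSet (Quot.out v))] : {q : EQ T Λ | headQ T Λ q = v}.Finite := by
  refine (Set.finite_range fun w : T.neighborSet (Quot.out v) =>
    πE T Λ ⟨(w, Quot.out v), w.2.symm⟩).subset fun q hq => ?_
  have hq' : πV Λ (Quot.out q).1.2 = πV Λ (Quot.out v) := hq.trans (Quot.out_eq v).symm
  obtain ⟨δ, hδ, hδq⟩ := πV_eq_iff.1 hq'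
  have hadj : T.Adj (δ (Quot.out q).1.1) (Quot.out v) :=
    hδq ▸ ((haut δ hδ).1 _ _).2 (Quot.out q).2
  exact ⟨⟨_, hadj.symm⟩, (πE_eq_iff.2 ⟨δ, hδ, rfl, hδq⟩).symm.trans (Quot.out_eq q)⟩

section Index

variable (hstab : ∀ v : V, Finite {γ : Λ // (γ : Equiv.Perm V) v = v})
include hstab

theorem relIndex_stabilizer_ne_zero (v w : V) :
    (stabilizer Λ w).relIndex (stabilizer Λ v) ≠ 0 :=
  have : Finite (stabilizer Λ v) := hstab v
  (Nat.pos_of_dvd_of_pos (Subgroup.relIndex_dvd_card _ _) Nat.card_pos).ne'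

theorem indQ_mk (x : DEdge T) :
    indQ T Λ (πE T Λ x) = (stabilizer Λ x.1.2).relIndex (stabilizer Λ x.1.1) := by
  obtain ⟨γ, hγ, h₁, h₂⟩ := erel_out_πE (Λ := Λ) x
  set y := Quot.out (πE T Λ x)
  have hcard := card_inf_mul_relIndex (stabilizer Λ y.1.2) (stabilizer Λ y.1.1)
  have : Finite (stabilizer Λ y.1.1) := hstab _
  have hpos : 0 < Nat.card ↥(stabilizer Λ y.1.1 ⊓ stabilizer Λ y.1.2) := by
    refine Nat.pos_of_ne_zero fun h0 => ?_
    rw [h0, zero_mul] at hcard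
    exact Nat.card_pos.ne' hcard.symm
  calc indQ T Λ (πE T Λ x)
      = Nat.card (stabilizer Λ y.1.1) / Nat.card ↥(stabilizer Λ y.1.1 ⊓ stabilizer Λ y.1.2) :=
        rfl
    _ = (stabilizer Λ y.1.2).relIndex (stabilizer Λ y.1.1) := by
        rw [← hcard, Nat.mul_div_cancel_left _ hpos]
    _ = _ := by
        rw [← h₁, ← h₂]
        exact (relIndex_stabilizer_smul (⟨γ, hγ⟩ : Λ) y.1.1 y.1.2).symm

theorem one_le_indQ (q : EQ T Λ) : 1 ≤ indQ T Λ q := by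
  obtain ⟨x, rfl⟩ := πE_surjective q
  rw [indQ_mk hstab]
  exact Nat.one_le_iff_ne_zero.2 (relIndex_stabilizer_ne_zero hstab _ _)

theorem two_le_indQ_of_πE_eq {x₁ x₂ : DEdge T} (htail : x₁.1.1 = x₂.1.1)
    (hne : x₁.1.2 ≠ x₂.1.2) (h : πE T Λ x₁ = πE T Λ x₂) : 2 ≤ indQ T Λ (πE T Λ x₁) := by
  obtain ⟨γ, hγ, hu, hw⟩ := πE_eq_iff.1 h
  have hne_one : (stabilizer Λ x₁.1.2).relIndex (stabilizer Λ x₁.1.1) ≠ 1 := by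
    rw [Ne, Subgroup.relIndex_eq_one]
    intro hle
    exact hne ((hle (x := ⟨γ, hγ⟩) (hu.trans htail.symm)).symm.trans hw)
  rw [indQ_mk hstab]
  have := relIndex_stabilizer_ne_zero hstab x₁.1.1 x₁.1.2
  omega

theorem exists_two_le_indQ_of_card_lt {v : VQ Λ} {s : Finset (EQ T Λ)}
    (hs : ∀ y, tailQ T Λ y = v → y ∈ s) (hcard : s.card < degQ T Λ v) :
    ∃ q ∈ s, 2 ≤ indQ T Λ q := by
  set u := Quot.out v
  have hcard' : s.card < Nat.card (T.neighborSet u) := hcard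
  have : Finite (T.neighborSet u) := Nat.finite_of_card_ne_zero (by omega)
  have := Fintype.ofFinite (T.neighborSet u)
  have htail (w : T.neighborSet u) : tailQ T Λ (πE T Λ (⟨(u, w), w.2⟩ : DEdge T)) = v :=
    (tailQ_mk _).trans (Quot.out_eq v)
  obtain ⟨w₁, w₂, hne, heq⟩ := Fintype.exists_ne_map_eq_of_card_lt
    (fun w : T.neighborSet u => (⟨_, hs _ (htail w)⟩ : s))
    (by rwa [Fintype.card_coe, ← Nat.card_eq_fintype_card])
  exact ⟨_, hs _ (htail w₁), two_le_indQ_of_πE_eq hstab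
    (x₂ := ⟨(u, w₂), w₂.2⟩) rfl (Subtype.coe_injective.ne hne) (congrArg Subtype.val heq)⟩

theorem exists_tailQ_eq_ne {v : VQ Λ} (hv : 2 ≤ degQ T Λ v) {b : EQ T Λ}
    (hb : indQ T Λ b = 1) : ∃ y, tailQ T Λ y = v ∧ y ≠ b := by
  by_contra! h
  obtain ⟨q, hq, hq₂⟩ := exists_two_le_indQ_of_card_lt hstab (s := {b})
    (fun y hy => Finset.mem_singleton.2 (h y hy)) (by rw [Finset.card_singleton]; omega)
  rw [Finset.mem_singleton.1 hq, hb] at hq₂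
  omega

theorem two_le_indQ_of_forall_tailQ_eq {v : VQ Λ} (hv : 3 ≤ degQ T Λ v) {a b : EQ T Λ}
    (hb : indQ T Λ b = 1) (h : ∀ y, tailQ T Λ y = v → y = a ∨ y = b) : 2 ≤ indQ T Λ a := by
  obtain ⟨q, hq, hq₂⟩ := exists_two_le_indQ_of_card_lt hstab (s := {a, b})
    (fun y hy => by simpa using h y hy) ((Finset.card_insert_le a {b}).trans_lt (by simp; omega))
  rcases Finset.mem_insert.1 hq with rfl | hq
  · exact hq₂
  · rw [Finset.mem_singleton.1 hq, hb] at hq₂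
    omega

end Index

section Kernel

variable (hdeg : ∀ v : V, 2 ≤ Nat.card (T.neighborSet v))
  (hstab : ∀ v : V, Finite {γ : Λ // (γ : Equiv.Perm V) v = v})
  (haut : ∀ γ ∈ Λ, IsTreeAut T γ)

include hdeg in
theorem degQ_sub_one_pos (v : VQ Λ) : (0 : ℝ) < degQ T Λ v - 1 := by
  have : (2 : ℝ) ≤ degQ T Λ v := by exact_mod_cast hdeg (Quot.out v)
  linarith

include hdeg hstab in
theorem kerP_nonneg (e f : EQ T Λ) : 0 ≤ kerP T Λ e f := by
  have hind : (1 : ℝ) ≤ indQ T Λ f := by exact_mod_cast one_le_indQ hstab f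
  have hden := degQ_sub_one_pos hdeg (headQ T Λ e)
  rw [kerP]
  split_ifs
  · exact div_nonneg (by linarith) hden.le
  · exact div_nonneg (by linarith) hden.le
  · exact le_rfl

include hdeg hstab in
theorem kerP_pos_of_ne {e f : EQ T Λ} (h : headQ T Λ e = tailQ T Λ f) (hne : f ≠ barQ T Λ e) :
    0 < kerP T Λ e f := by
  rw [kerP, if_pos h, if_neg hne]
  exact div_pos (Nat.cast_pos.2 (one_le_indQ hstab f)) (degQ_sub_one_pos hdeg _)

include hdeg in
theorem kerP_barQ_pos {e : EQ T Λ} (h : 2 ≤ indQ T Λ (barQ T Λ e)) :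
    0 < kerP T Λ e (barQ T Λ e) := by
  rw [kerP, if_pos (tailQ_barQ e).symm, if_pos rfl]
  have : (2 : ℝ) ≤ indQ T Λ (barQ T Λ e) := by exact_mod_cast h
  exact div_pos (by linarith) (degQ_sub_one_pos hdeg _)

theorem headQ_eq_tailQ_of_kerP_ne_zero {e f : EQ T Λ} (h : kerP T Λ e f ≠ 0) :
    headQ T Λ e = tailQ T Λ f := by
  by_contra hc
  exact h (if_neg hc)

include hdeg hstab in
theorem kerP_barQ_barQ_pos {x y : EQ T Λ} (h : 0 < kerP T Λ x y) :
    0 < kerP T Λ (barQ T Λ y) (barQ T Λ x) := by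
  by_cases hy : y = barQ T Λ x
  · subst hy
    rwa [barQ_barQ]
  · refine kerP_pos_of_ne hdeg hstab ?_ ?_
    · rw [headQ_barQ, tailQ_barQ, headQ_eq_tailQ_of_kerP_ne_zero h.ne']
    · rw [barQ_barQ]
      exact Ne.symm hy

theorem kerPn_zero_pos_iff {x y : EQ T Λ} : 0 < kerPn T Λ 0 x y ↔ x = y := by
  rw [kerPn]
  split_ifs with h <;> simp [h]

theorem kerPn_one (e f : EQ T Λ) : kerPn T Λ 1 e f = kerP T Λ e f := by
  rw [kerPn, tsum_eq_single e fun g hg => by rw [kerPn, if_neg (Ne.symm hg), zero_mul],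
    kerPn, if_pos rfl, one_mul]

theorem exists_of_kerPn_succ_ne_zero {n : ℕ} {x y : EQ T Λ} (h : kerPn T Λ (n + 1) x y ≠ 0) :
    ∃ g, kerPn T Λ n x g ≠ 0 ∧ kerP T Λ g y ≠ 0 := by
  rw [kerPn] at h
  obtain ⟨g, hg⟩ := exists_ne_zero_of_tsum_ne_zero h
  exact ⟨g, left_ne_zero_of_mul hg, right_ne_zero_of_mul hg⟩

include hdeg hstab in
theorem kerPn_nonneg (n : ℕ) (x y : EQ T Λ) : 0 ≤ kerPn T Λ n x y := by
  induction n generalizing y with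
  | zero =>
    rw [kerPn]
    split_ifs <;> norm_num
  | succ n ih =>
    rw [kerPn]
    exact tsum_nonneg fun g => mul_nonneg (ih g) (kerP_nonneg hdeg hstab g y)

include hdeg hstab haut in
theorem kerPn_succ_pos_iff {n : ℕ} {x y : EQ T Λ} :
    0 < kerPn T Λ (n + 1) x y ↔ ∃ g, 0 < kerPn T Λ n x g ∧ 0 < kerP T Λ g y := by
  constructor
  · intro h
    obtain ⟨g, hg₁, hg₂⟩ := exists_of_kerPn_succ_ne_zero h.ne'
    exact ⟨g, (kerPn_nonneg hdeg hstab n x g).lt_of_ne' hg₁,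
      (kerP_nonneg hdeg hstab g y).lt_of_ne' hg₂⟩
  · rintro ⟨g, hg₁, hg₂⟩
    have : Finite (T.neighborSet (Quot.out (tailQ T Λ y))) :=
      Nat.finite_of_card_ne_zero (by have := hdeg (Quot.out (tailQ T Λ y)); omega)
    have hsum : Summable fun g => kerPn T Λ n x g * kerP T Λ g y :=
      summable_of_hasFiniteSupport <| (finite_setOf_headQ_eq haut (tailQ T Λ y)).subset
        fun g hg => headQ_eq_tailQ_of_kerP_ne_zero (right_ne_zero_of_mul hg)
    rw [kerPn]
    exact (mul_pos hg₁ hg₂).trans_le <| hsum.le_tsum g fun g' _ =>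
      mul_nonneg (kerPn_nonneg hdeg hstab n x g') (kerP_nonneg hdeg hstab g' y)

include hdeg hstab haut in
theorem kerPn_add_pos {m n : ℕ} {x y z : EQ T Λ} (h₁ : 0 < kerPn T Λ m x y)
    (h₂ : 0 < kerPn T Λ n y z) : 0 < kerPn T Λ (m + n) x z := by
  induction n generalizing z with
  | zero => rwa [← kerPn_zero_pos_iff.1 h₂]
  | succ n ih =>
    obtain ⟨g, hg₁, hg₂⟩ := (kerPn_succ_pos_iff hdeg hstab haut).1 h₂
    exact (kerPn_succ_pos_iff hdeg hstab haut).2 ⟨g, ih hg₁, hg₂⟩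

include hdeg hstab haut in
theorem kerPn_barQ_barQ_pos {n : ℕ} {x y : EQ T Λ} (h : 0 < kerPn T Λ n x y) :
    0 < kerPn T Λ n (barQ T Λ y) (barQ T Λ x) := by
  induction n generalizing y with
  | zero => rw [kerPn_zero_pos_iff] at h ⊢; rw [h]
  | succ n ih =>
    obtain ⟨g, hg₁, hg₂⟩ := (kerPn_succ_pos_iff hdeg hstab haut).1 h
    rw [Nat.add_comm]
    refine kerPn_add_pos hdeg hstab haut ?_ (ih hg₁)
    rw [kerPn_one]
    exact kerP_barQ_barQ_pos hdeg hstab hg₂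

def reachSet (x : EQ T Λ) : Set (EQ T Λ) := {y | ∃ n, 0 < kerPn T Λ n x y}

theorem mem_reachSet_self (x : EQ T Λ) : x ∈ reachSet x := ⟨0, kerPn_zero_pos_iff.2 rfl⟩

include hdeg hstab haut in
theorem reachSet_trans {x y z : EQ T Λ} (hy : y ∈ reachSet x) (hz : z ∈ reachSet y) :
    z ∈ reachSet x :=
  let ⟨_, hm⟩ := hy
  let ⟨_, hn⟩ := hz
  ⟨_, kerPn_add_pos hdeg hstab haut hm hn⟩

theorem mem_reachSet_of_kerP_pos {x y : EQ T Λ} (h : 0 < kerP T Λ x y) : y ∈ reachSet x :=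
  ⟨1, by rwa [kerPn_one]⟩

end Kernel

theorem map_tailQ_eq_add_of_kerPn_ne_zero {G : Type*} [AddMonoidWithOne G] (φ : VQ Λ → G)
    (hφ : ∀ q : EQ T Λ, φ (headQ T Λ q) = φ (tailQ T Λ q) + 1) {n : ℕ} {x y : EQ T Λ}
    (h : kerPn T Λ n x y ≠ 0) : φ (tailQ T Λ y) = φ (tailQ T Λ x) + n := by
  induction n generalizing y with
  | zero =>
    rw [kerPn] at h
    rw [(ite_ne_right_iff.1 h).1, Nat.cast_zero, add_zero]
  | succ n ih =>
    obtain ⟨g, hg₁, hg₂⟩ := exists_of_kerPn_succ_ne_zero h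
    rw [← headQ_eq_tailQ_of_kerP_ne_zero hg₂, hφ, ih hg₁, Nat.cast_succ, add_assoc]

theorem exists_zmod_two_map_headQ_eq_add_one {d₁ d₂ : ℕ} (hT : IsBiregularTree T d₁ d₂)
    (haut : ∀ γ ∈ Λ, IsTreeAut T γ) :
    ∃ φ : VQ Λ → ZMod 2, ∀ q : EQ T Λ, φ (headQ T Λ q) = φ (tailQ T Λ q) + 1 := by
  obtain ⟨hconn, -, c, hc, -, -⟩ := hT
  let col : T.Coloring Bool := SimpleGraph.Coloring.mk c fun h => hc _ _ h
  have hinv {γ : Equiv.Perm V} (hγ : γ ∈ Λ) (v : V) : c v = c (γ v) := by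
    obtain ⟨p, hp⟩ := (hconn v (γ v)).exists_walk_length_eq_dist
    exact Bool.eq_iff_iff.2 ((col.even_length_iff_congr p).1 (hp ▸ (haut γ hγ).2 v))
  refine ⟨Quot.lift (fun v => if c v then 1 else 0) ?_, fun q => ?_⟩
  · rintro u v ⟨γ, hγ, rfl⟩
    simp only [← hinv hγ]
  · have hq := hc _ _ (Quot.out q).2
    change (if c (Quot.out q).1.2 then 1 else 0 : ZMod 2) =
      (if c (Quot.out q).1.1 then 1 else 0) + 1
    revert hq
    cases c (Quot.out q).1.1 <;> cases c (Quot.out q).1.2 <;> decide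

section Reversal

variable (hdeg : ∀ v : V, 2 ≤ Nat.card (T.neighborSet v))
  (hstab : ∀ v : V, Finite {γ : Λ // (γ : Equiv.Perm V) v = v})
  (haut : ∀ γ ∈ Λ, IsTreeAut T γ) {N : VQ Λ → ℝ} (hNpos : ∀ v, 0 < N v)
  (hN : ∀ e : EQ T Λ, N (headQ T Λ e) = deltaQ T Λ e * N (tailQ T Λ e)) {z : EQ T Λ}

include hN in
theorem apply_headQ_eq_div_indQ {e : EQ T Λ} (he : indQ T Λ (barQ T Λ e) = 1) :
    N (headQ T Λ e) = N (tailQ T Λ e) / indQ T Λ e := by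
  rw [hN, deltaQ, he]
  ring

include hdeg hstab haut in
theorem barQ_mem_reachSet_of_kerP_pos {w₁ w₂ : EQ T Λ} (h₁ : w₁ ∈ reachSet z)
    (h₂ : w₂ ∈ reachSet z) (h : 0 < kerP T Λ w₁ (barQ T Λ w₂)) : barQ T Λ z ∈ reachSet z :=
  let ⟨n, hn⟩ := h₂
  reachSet_trans hdeg hstab haut h₁ <| reachSet_trans hdeg hstab haut
    (mem_reachSet_of_kerP_pos h) ⟨n, kerPn_barQ_barQ_pos hdeg hstab haut hn⟩

include hdeg hstab haut in
theorem indQ_barQ_eq_one_of_mem_reachSet (hz : barQ T Λ z ∉ reachSet z) {w : EQ T Λ}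
    (hw : w ∈ reachSet z) : indQ T Λ (barQ T Λ w) = 1 := by
  by_contra hne
  have := one_le_indQ hstab (barQ T Λ w)
  exact hz (barQ_mem_reachSet_of_kerP_pos hdeg hstab haut hw hw (kerP_barQ_pos hdeg (by omega)))

include hdeg hstab haut in
theorem injOn_headQ_reachSet (hz : barQ T Λ z ∉ reachSet z) :
    Set.InjOn (headQ T Λ) (reachSet z) := by
  intro w₁ h₁ w₂ h₂ hhead
  by_contra hne
  refine hz (barQ_mem_reachSet_of_kerP_pos hdeg hstab haut h₁ h₂ (kerP_pos_of_ne hdeg hstab ?_ ?_))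
  · rw [tailQ_barQ, hhead]
  · exact barQ_injective.ne (Ne.symm hne)

include hdeg hstab haut in
theorem mem_reachSet_of_tailQ_eq {w y : EQ T Λ} (hw : w ∈ reachSet z)
    (hy : tailQ T Λ y = headQ T Λ w) (hne : y ≠ barQ T Λ w) : y ∈ reachSet z :=
  reachSet_trans hdeg hstab haut hw (mem_reachSet_of_kerP_pos (kerP_pos_of_ne hdeg hstab hy.symm hne))

include hdeg hstab haut hNpos hN in
theorem apply_headQ_le_of_mem_reachSet (hz : barQ T Λ z ∉ reachSet z) {w : EQ T Λ}
    (hw : w ∈ reachSet z) : N (headQ T Λ w) ≤ N (headQ T Λ z) := by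
  obtain ⟨n, hn⟩ := hw
  induction n generalizing w with
  | zero => rw [kerPn_zero_pos_iff.1 hn]
  | succ n ih =>
    obtain ⟨g, hg, hgw⟩ := (kerPn_succ_pos_iff hdeg hstab haut).1 hn
    rw [apply_headQ_eq_div_indQ hN
        (indQ_barQ_eq_one_of_mem_reachSet hdeg hstab haut hz ⟨n + 1, hn⟩),
      ← headQ_eq_tailQ_of_kerP_ne_zero hgw.ne']
    exact (div_le_self (hNpos _).le (by exact_mod_cast one_le_indQ hstab w)).trans (ih hg)

include hdeg hstab haut hNpos hN in
theorem reachSet_finite (hNsum : Summable fun v : VQ Λ => (N v)⁻¹)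
    (hz : barQ T Λ z ∉ reachSet z) : (reachSet z).Finite := by
  have hlarge : {v : VQ Λ | (N (headQ T Λ z))⁻¹ ≤ (N v)⁻¹}.Finite := by
    simpa [not_lt] using Filter.eventually_cofinite.1 <|
      hNsum.tendsto_cofinite_zero.eventually_lt_const (inv_pos.2 (hNpos (headQ T Λ z)))
  refine Set.Finite.of_finite_image (hlarge.subset ?_) (injOn_headQ_reachSet hdeg hstab haut hz)
  rintro _ ⟨w, hw, rfl⟩
  exact inv_anti₀ (hNpos _) (apply_headQ_le_of_mem_reachSet hdeg hstab haut hNpos hN hz hw)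

include hdeg hstab haut in
theorem exists_bijective_continuation (hz : barQ T Λ z ∉ reachSet z)
    (hfin : (reachSet z).Finite) :
    ∃ σ : reachSet z → reachSet z, σ.Bijective ∧ ∀ w : reachSet z,
      tailQ T Λ (σ w) = headQ T Λ w ∧
        ∀ y, tailQ T Λ y = headQ T Λ w → y = σ w ∨ y = barQ T Λ w := by
  have : Finite (reachSet z) := hfin.to_subtype
  choose next hnext_tail hnext_ne using fun w : reachSet z =>
    exists_tailQ_eq_ne hstab (hdeg _) (indQ_barQ_eq_one_of_mem_reachSet hdeg hstab haut hz w.2)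
  let σ (w : reachSet z) : reachSet z :=
    ⟨next w, mem_reachSet_of_tailQ_eq hdeg hstab haut w.2 (hnext_tail w) (hnext_ne w)⟩
  have hσ : σ.Bijective := Finite.injective_iff_bijective.1 fun a b hab =>
    Subtype.ext <| injOn_headQ_reachSet hdeg hstab haut hz a.2 b.2 <| by
      rw [← hnext_tail a, ← hnext_tail b]
      exact congrArg (tailQ T Λ ∘ Subtype.val) hab
  refine ⟨σ, hσ, fun w => ⟨hnext_tail w, fun y hy => or_iff_not_imp_right.2 fun hne => ?_⟩⟩
  obtain ⟨w', hw'⟩ := hσ.2 ⟨y, mem_reachSet_of_tailQ_eq hdeg hstab haut w.2 hy hne⟩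
  have hy' : next w' = y := congrArg Subtype.val hw'
  have : w' = w := Subtype.ext <| injOn_headQ_reachSet hdeg hstab haut hz w'.2 w.2 <| by
    rw [← hnext_tail w', hy', hy]
  rw [← hy', this]

include hstab haut hNpos hN in
theorem reachSet_infinite (hdeg : ∀ v : V, 3 ≤ Nat.card (T.neighborSet v))
    (hz : barQ T Λ z ∉ reachSet z) : (reachSet z).Infinite := by
  have hdeg₂ (v : V) : 2 ≤ Nat.card (T.neighborSet v) := (hdeg v).trans' (by norm_num)
  intro hfin
  obtain ⟨σ, hσ, hσ_fiber⟩ := exists_bijective_continuation hdeg₂ hstab haut hz hfin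
  have : Fintype (reachSet z) := hfin.fintype
  have : Nonempty (reachSet z) := ⟨⟨z, mem_reachSet_self z⟩⟩
  have hdecr (w : reachSet z) : N (headQ T Λ (σ w)) < N (headQ T Λ w) := by
    have hind := two_le_indQ_of_forall_tailQ_eq hstab (hdeg _)
      (indQ_barQ_eq_one_of_mem_reachSet hdeg₂ hstab haut hz w.2) (hσ_fiber w).2
    rw [apply_headQ_eq_div_indQ hN (indQ_barQ_eq_one_of_mem_reachSet hdeg₂ hstab haut hz (σ w).2),
      (hσ_fiber w).1]
    exact div_lt_self (hNpos _) (by exact_mod_cast hind)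
  exact (Finset.sum_lt_sum_of_nonempty Finset.univ_nonempty fun w _ => hdecr w).ne
    (Equiv.sum_comp (Equiv.ofBijective σ hσ) fun w => N (headQ T Λ w))

end Reversal

section Irreducibility

variable (hdeg : ∀ v : V, 3 ≤ Nat.card (T.neighborSet v)) (hΛ : IsTreeLattice T Λ)
include hdeg hΛ

theorem barQ_mem_reachSet (z : EQ T Λ) : barQ T Λ z ∈ reachSet z := by
  obtain ⟨haut, hstab, -, N, -, hNpos, hN, hNsum⟩ := hΛ
  have hdeg₂ (v : V) : 2 ≤ Nat.card (T.neighborSet v) := (hdeg v).trans' (by norm_num)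
  by_contra hz
  exact reachSet_infinite hstab haut hNpos hN hdeg hz
    (reachSet_finite hdeg₂ hstab haut hNpos hN hNsum hz)

theorem mem_reachSet_of_headQ_eq_tailQ {x y : EQ T Λ} (h : headQ T Λ x = tailQ T Λ y) :
    y ∈ reachSet x := by
  by_cases hy : y = barQ T Λ x
  · exact hy ▸ barQ_mem_reachSet hdeg hΛ x
  · exact mem_reachSet_of_kerP_pos
      (kerP_pos_of_ne (fun v => (hdeg v).trans' (by norm_num)) hΛ.2.1 h hy)

theorem mem_reachSet (hconn : T.Connected) (x y : EQ T Λ) : y ∈ reachSet x := by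
  have hdeg₂ (v : V) : 2 ≤ Nat.card (T.neighborSet v) := (hdeg v).trans' (by norm_num)
  suffices ∀ u w (p : T.Walk u w) (x y : EQ T Λ),
      headQ T Λ x = πV Λ u → tailQ T Λ y = πV Λ w → y ∈ reachSet x from
    this _ _ (hconn _ _).some x y rfl rfl
  intro u w p
  induction p with
  | nil => exact fun x y hx hy => mem_reachSet_of_headQ_eq_tailQ hdeg hΛ (hx.trans hy.symm)
  | cons hadj p ih =>
    intro x y hx hy
    exact reachSet_trans hdeg₂ hΛ.2.1 hΛ.1
      (mem_reachSet_of_headQ_eq_tailQ hdeg hΛ (hx.trans (tailQ_mk ⟨(_, _), hadj⟩).symm))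
      (ih (πE T Λ ⟨(_, _), hadj⟩) y (headQ_mk _) hy)

end Irreducibility

/-- Lemma 3.3. If the edge-indexed quotient graph contains two
consecutive edges `f, e` with `e ≠ f̄` and both indices `> 1`, then the period of the
associated (irreducible) Markov chain is exactly `2`; i.e. for every state `s`, the gcd
of `{n ≥ 1 | Pⁿ(s,s) > 0}` equals `2`. -/
theorem markov_chain_period_two {V : Type*} (T : SimpleGraph V)
    (d₁ d₂ : ℕ) (hd₁ : 3 ≤ d₁) (hd₂ : 3 ≤ d₂) (hT : IsBiregularTree T d₁ d₂)
    (Λ : Subgroup (Equiv.Perm V)) (hΛ : IsTreeLattice T Λ)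
    (e f : EQ T Λ) (hef : e ≠ barQ T Λ f) (hcons : headQ T Λ f = tailQ T Λ e)
    (hinde : 1 < indQ T Λ e) (hindf : 1 < indQ T Λ f) :
    ∀ s : EQ T Λ,
      (∀ n : ℕ, 0 < n → 0 < kerPn T Λ n s s → 2 ∣ n) ∧
      (∀ d : ℕ, (∀ n : ℕ, 0 < n → 0 < kerPn T Λ n s s → d ∣ n) → d ∣ 2) := by
  have hdeg := hT.le_card_neighborSet hd₁ hd₂
  have hdeg₂ (v : V) : 2 ≤ Nat.card (T.neighborSet v) := (hdeg v).trans' (by norm_num)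
  obtain ⟨haut, hstab, -⟩ := id hΛ
  obtain ⟨φ, hφ⟩ := exists_zmod_two_map_headQ_eq_add_one hT haut
  intro s
  refine ⟨fun n _ hn => ?_, fun d hd => ?_⟩
  · exact (ZMod.natCast_eq_zero_iff n 2).1
      (left_eq_add.1 (map_tailQ_eq_add_of_kerPn_ne_zero φ hφ hn.ne'))
  have hback {g : EQ T Λ} (hg : 1 < indQ T Λ g) : 0 < kerP T Λ (barQ T Λ g) g := by
    simpa only [barQ_barQ] using kerP_barQ_pos hdeg₂ (e := barQ T Λ g) (by rwa [barQ_barQ])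
  have path₁ : 0 < kerPn T Λ 1 (barQ T Λ e) e := by
    rw [kerPn_one]
    exact hback hinde
  have path₃ : 0 < kerPn T Λ 3 (barQ T Λ e) e := by
    refine (kerPn_succ_pos_iff hdeg₂ hstab haut).2 ⟨f, ?_, kerP_pos_of_ne hdeg₂ hstab hcons hef⟩
    refine (kerPn_succ_pos_iff hdeg₂ hstab haut).2 ⟨barQ T Λ f, ?_, hback hindf⟩
    rw [kerPn_one]
    exact kerP_pos_of_ne hdeg₂ hstab (by rw [headQ_barQ, tailQ_barQ, hcons])
      (by rw [barQ_barQ]; exact Ne.symm hef)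
  obtain ⟨p, hp⟩ := mem_reachSet hdeg hΛ hT.1 s (barQ T Λ e)
  obtain ⟨q, hq⟩ := mem_reachSet hdeg hΛ hT.1 e s
  have loop {k : ℕ} (hk₀ : 0 < k) (hk : 0 < kerPn T Λ k (barQ T Λ e) e) : d ∣ p + k + q :=
    hd _ (by omega) (kerPn_add_pos hdeg₂ hstab haut (kerPn_add_pos hdeg₂ hstab haut hp hk) hq)
  have := Nat.dvd_sub (loop (by norm_num) path₃) (loop one_pos path₁)
  rwa [show p + 3 + q - (p + 1 + q) = 2 by omega] at this

end TreeDyn
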